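/- For a compact set F ⊂ D = {(x,y) : |y| < x, |y| < 2-x} ⊂ ℂ and t > 0, there exists a constant C > 0 such that Σ_{n∈ℤ} (∫₀ᵗ |∂ₓK(z + 2n, t-τ)|² dτ)^{1/2} ≤ C for all z ∈ F, where ∂ₓK(z,s) = -z/(4√π s^{3/2}) e^{-z²/(4s)}. -/

import Mathlib

/-
The heat kernel derivative satisfies `‖∂ₓK(w,s)‖² = ‖w‖² e^{-Re(w²)/(2s)} / (16π s³)`. Split the
Gaussian factor into two halves: one absorbs the singularity `s⁻³` at `s = 0` (as `e^{-x} ≤ 6/x³`),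
the other is at most `e^{-Re(w²)/(4t)}` for `s ≤ t`. On a compact `F ⊆ D` both `x - |y|` and
`2 - x - |y|` are bounded below by some `δ > 0`, and then `w = z + 2n` satisfies
`Re(w²) ≥ δ² max(1, n²)`. Hence the `n`-th term of the series is at most a constant times
`e^{-δ² n²/(8t)}`, a summable Gaussian majorant.
-/

open Complex MeasureTheory

/-- The open square `D` with vertices `0, 1+i, 2, 1-i`, viewed in `ℂ`. -/
def Dsq : Set ℂ := {z : ℂ | |z.im| < z.re ∧ |z.im| < 2 - z.re}

/-- `∂ₓK(z,s) = -z/(4√π s^{3/2}) e^{-z²/(4s)}`. -/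
noncomputable def dxK (z : ℂ) (t : ℝ) : ℂ :=
  -z / (4 * Real.sqrt Real.pi * (t ^ ((3:ℝ)/2) : ℝ)) * Complex.exp (-z ^ 2 / (4 * (t : ℂ)))

open Real

lemma Real.exp_neg_le_six_div_pow_three {x : ℝ} (hx : 0 < x) : rexp (-x) ≤ 6 / x ^ 3 := by
  rw [exp_neg, inv_le_comm₀ (exp_pos x) (by positivity), inv_div]
  simpa [Nat.factorial] using pow_div_factorial_le_exp x hx.le 3

lemma Real.summable_exp_neg_mul_int_sq {c : ℝ} (hc : 0 < c) :
    Summable fun n : ℤ => rexp (-c * (n : ℝ) ^ 2) := by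
  have hnat : Summable fun n : ℕ => rexp (-c * (n : ℝ) ^ 2) :=
    summable_exp_nat_mul_of_ge (neg_neg_of_pos hc) fun n => by
      exact_mod_cast Nat.le_self_pow two_ne_zero n
  exact .of_nat_of_neg (by simpa using hnat) (by simpa using hnat)

lemma norm_dxK_sq (w : ℂ) {s : ℝ} (hs : 0 < s) :
    ‖dxK w s‖ ^ 2 = ‖w‖ ^ 2 / (16 * π * s ^ 3) * rexp (-((w ^ 2).re / (2 * s))) := by
  have hden : ‖(4 * (√π : ℂ) * ((s ^ ((3 : ℝ) / 2) : ℝ) : ℂ))‖ = 4 * √π * s ^ ((3 : ℝ) / 2) := by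
    norm_cast
    rw [Real.norm_of_nonneg (by positivity)]
  have hre : (-w ^ 2 / (4 * (s : ℂ))).re = -((w ^ 2).re / (4 * s)) := by
    norm_cast
    rw [Complex.div_ofReal_re, Complex.neg_re, neg_div]
  have hsq : (s ^ ((3 : ℝ) / 2)) ^ 2 = s ^ 3 := by
    rw [← Real.rpow_mul_natCast hs.le]
    norm_num
  have hexp : rexp (-((w ^ 2).re / (4 * s))) ^ 2 = rexp (-((w ^ 2).re / (2 * s))) := by
    rw [← Real.exp_nat_mul]
    congr 1
    field_simp
    ring
  rw [dxK, norm_mul, norm_div, norm_neg, hden, Complex.norm_exp, hre, mul_pow, div_pow, hexp,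
    mul_pow, mul_pow, hsq, sq_sqrt pi_pos.le]
  ring

lemma norm_dxK_sq_le (w : ℂ) {s t : ℝ} (ha : 0 < (w ^ 2).re) (hs : 0 < s) (hst : s ≤ t) :
    ‖dxK w s‖ ^ 2 ≤ 24 * ‖w‖ ^ 2 / (π * (w ^ 2).re ^ 3) * rexp (-((w ^ 2).re / (4 * t))) := by
  set a := (w ^ 2).re
  have hsplit : rexp (-(a / (2 * s))) = rexp (-(a / (4 * s))) * rexp (-(a / (4 * s))) := by
    rw [← Real.exp_add]
    congr 1
    field_simp
    ring
  have hsing : rexp (-(a / (4 * s))) ≤ 6 / (a / (4 * s)) ^ 3 :=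
    exp_neg_le_six_div_pow_three (by positivity)
  have hdecay : rexp (-(a / (4 * s))) ≤ rexp (-(a / (4 * t))) := by gcongr
  rw [norm_dxK_sq w hs, hsplit]
  calc ‖w‖ ^ 2 / (16 * π * s ^ 3) * (rexp (-(a / (4 * s))) * rexp (-(a / (4 * s))))
      ≤ ‖w‖ ^ 2 / (16 * π * s ^ 3) * (6 / (a / (4 * s)) ^ 3 * rexp (-(a / (4 * t)))) := by
        gcongr
    _ = 24 * ‖w‖ ^ 2 / (π * a ^ 3) * rexp (-(a / (4 * t))) := by
        field_simp
        ring

lemma Complex.sq_abs_re_sub_abs_im_le_re_sq {w : ℂ} (h : |w.im| ≤ |w.re|) :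
    (|w.re| - |w.im|) ^ 2 ≤ (w ^ 2).re := by
  rw [sq w, Complex.mul_re]
  nlinarith [sq_abs w.re, sq_abs w.im, abs_nonneg w.im]

lemma le_abs_re_add_two_mul_sub_abs_im {z : ℂ} {δ : ℝ} (hδ : 0 ≤ δ) (h₁ : δ ≤ z.re - |z.im|)
    (h₂ : δ ≤ 2 - z.re - |z.im|) (n : ℤ) :
    δ ≤ |z.re + 2 * n| - |z.im| ∧ δ * |(n : ℝ)| ≤ |z.re + 2 * n| - |z.im| := by
  have hδ₁ : δ ≤ 1 := by linarith [abs_nonneg z.im]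
  rcases le_or_gt 0 n with hn | hn
  · have hn : (0 : ℝ) ≤ n := by exact_mod_cast hn
    rw [abs_of_nonneg (a := z.re + 2 * n) (by linarith [abs_nonneg z.im]), abs_of_nonneg hn]
    constructor <;> nlinarith
  · have hn : (n : ℝ) ≤ -1 := by exact_mod_cast Int.le_sub_one_of_lt hn
    rw [abs_of_nonpos (a := z.re + 2 * n) (by linarith [abs_nonneg z.im]),
      abs_of_neg (a := (n : ℝ)) (by linarith)]
    constructor <;> nlinarith

lemma sq_le_re_add_two_mul_sq {z : ℂ} {δ : ℝ} (hδ : 0 ≤ δ) (h₁ : δ ≤ z.re - |z.im|)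
    (h₂ : δ ≤ 2 - z.re - |z.im|) (n : ℤ) :
    δ ^ 2 ≤ ((z + 2 * n) ^ 2).re ∧ δ ^ 2 * n ^ 2 ≤ ((z + 2 * n) ^ 2).re := by
  obtain ⟨hle, hle_mul⟩ := le_abs_re_add_two_mul_sub_abs_im hδ h₁ h₂ n
  have hre : (z + 2 * n).re = z.re + 2 * n := by simp
  have him : (z + 2 * n).im = z.im := by simp
  have hsq := Complex.sq_abs_re_sub_abs_im_le_re_sq (w := z + 2 * n) (by rw [hre, him]; linarith)
  rw [hre, him] at hsq
  have hδn := pow_le_pow_left₀ (by positivity) hle_mul 2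
  rw [mul_pow, sq_abs] at hδn
  exact ⟨by nlinarith, hδn.trans hsq⟩

lemma norm_dxK_add_two_mul_sq_le {z : ℂ} {δ s t : ℝ} (hδ : 0 < δ) (h₁ : δ ≤ z.re - |z.im|)
    (h₂ : δ ≤ 2 - z.re - |z.im|) (n : ℤ) (hs : 0 < s) (hst : s ≤ t) :
    ‖dxK (z + 2 * n) s‖ ^ 2 ≤ 72 / (π * δ ^ 6) * rexp (-(δ ^ 2 / (4 * t)) * n ^ 2) := by
  obtain ⟨hδa, hδna⟩ := sq_le_re_add_two_mul_sq hδ.le h₁ h₂ n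
  set w := z + 2 * (n : ℂ)
  set a := (w ^ 2).re
  have ha : 0 < a := lt_of_lt_of_le (by positivity) hδa
  have hnorm : ‖w‖ ^ 2 ≤ a + 2 := by
    have him : |w.im| ≤ 1 := by simp [w]; linarith [abs_nonneg z.im]
    have : ‖w‖ ^ 2 = a + 2 * w.im ^ 2 := by
      rw [Complex.sq_norm, Complex.normSq_apply]
      simp only [a, sq, Complex.mul_re]
      ring
    nlinarith [sq_abs w.im, abs_nonneg w.im]
  have hcoef : 24 * ‖w‖ ^ 2 / (π * a ^ 3) ≤ 72 / (π * δ ^ 6) := by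
    rw [div_le_div_iff₀ (by positivity) (by positivity)]
    have hδ₁ : δ ^ 2 ≤ 1 := by nlinarith [abs_nonneg z.im]
    have h₄ : δ ^ 4 ≤ a ^ 2 := by simpa [← pow_mul] using pow_le_pow_left₀ (by positivity) hδa 2
    have h₆ : δ ^ 6 ≤ a ^ 3 := by simpa [← pow_mul] using pow_le_pow_left₀ (by positivity) hδa 3
    have hkey : ‖w‖ ^ 2 * δ ^ 6 ≤ 3 * a ^ 3 := by
      nlinarith [mul_le_mul_of_nonneg_right hnorm (by positivity : (0 : ℝ) ≤ δ ^ 6),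
        mul_le_mul_of_nonneg_left h₄ (by positivity : (0 : ℝ) ≤ a * δ ^ 2),
        mul_le_mul_of_nonneg_left hδ₁ (by positivity : (0 : ℝ) ≤ a ^ 3)]
    nlinarith [mul_le_mul_of_nonneg_left hkey pi_pos.le]
  have hexp : rexp (-(a / (4 * t))) ≤ rexp (-(δ ^ 2 / (4 * t)) * n ^ 2) := by
    have ht : 0 < t := hs.trans_le hst
    rw [neg_mul, div_mul_eq_mul_div]
    gcongr
  calc ‖dxK w s‖ ^ 2 ≤ 24 * ‖w‖ ^ 2 / (π * a ^ 3) * rexp (-(a / (4 * t))) :=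
        norm_dxK_sq_le w ha hs hst
    _ ≤ 72 / (π * δ ^ 6) * rexp (-(δ ^ 2 / (4 * t)) * n ^ 2) := by gcongr

lemma L2_norm_dxK_add_two_mul_le {z : ℂ} {δ t : ℝ} (hδ : 0 < δ) (h₁ : δ ≤ z.re - |z.im|)
    (h₂ : δ ≤ 2 - z.re - |z.im|) (ht : 0 < t) (n : ℤ) :
    (∫ τ in Set.Ioo (0 : ℝ) t, ‖dxK (z + 2 * n) (t - τ)‖ ^ 2) ^ ((1 : ℝ) / 2) ≤
      √(72 * t / (π * δ ^ 6)) * rexp (-(δ ^ 2 / (8 * t)) * n ^ 2) := by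
  have hint : ∫ τ in Set.Ioo (0 : ℝ) t, ‖dxK (z + 2 * n) (t - τ)‖ ^ 2 ≤
      72 / (π * δ ^ 6) * rexp (-(δ ^ 2 / (4 * t)) * n ^ 2) * t := by
    have := norm_setIntegral_le_of_norm_le_const (measure_Ioo_lt_top (μ := volume))
      fun τ (hτ : τ ∈ Set.Ioo 0 t) => (Real.norm_of_nonneg (sq_nonneg _)).trans_le
        (norm_dxK_add_two_mul_sq_le hδ h₁ h₂ n (sub_pos.2 hτ.2) (by linarith [hτ.1]))
    rwa [Real.norm_of_nonneg (setIntegral_nonneg measurableSet_Ioo fun _ _ => sq_nonneg _),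
      volume_real_Ioo_of_le ht.le, sub_zero] at this
  rw [← sqrt_eq_rpow, sqrt_le_left (by positivity), mul_pow, sq_sqrt (by positivity),
    ← Real.exp_nat_mul]
  convert hint using 1
  field_simp
  ring_nf

lemma IsCompact.exists_pos_forall_le_of_subset_Dsq {F : Set ℂ} (hF : IsCompact F)
    (hFD : F ⊆ Dsq) :
    ∃ δ > 0, ∀ z ∈ F, δ ≤ z.re - |z.im| ∧ δ ≤ 2 - z.re - |z.im| := by
  obtain ⟨δ, hδ, hle⟩ := hF.exists_forall_le'
    (f := fun z : ℂ => min (z.re - |z.im|) (2 - z.re - |z.im|)) (by fun_prop) (a := 0)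
    fun z hz => lt_min (by linarith [(hFD hz).1]) (by linarith [(hFD hz).2])
  exact ⟨δ, hδ, fun z hz => le_min_iff.1 (hle z hz)⟩

/-- For a compact `F ⊆ D` and `t > 0`, the series over `n ∈ ℤ` of the `L²(0,t)`-norms
of `τ ↦ ∂ₓK(z+2n, t-τ)` is uniformly bounded on `F`. -/
theorem sum_L2_norms_uniformly_bounded (F : Set ℂ) (hF : IsCompact F) (hFD : F ⊆ Dsq)
    (t : ℝ) (ht : 0 < t) :
    ∃ C : ℝ, 0 < C ∧ ∀ z ∈ F,
      Summable (fun n : ℤ =>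
        (∫ τ in Set.Ioo (0:ℝ) t, ‖dxK (z + 2 * (n : ℂ)) (t - τ)‖ ^ 2) ^ ((1:ℝ)/2)) ∧
      (∑' n : ℤ,
        (∫ τ in Set.Ioo (0:ℝ) t, ‖dxK (z + 2 * (n : ℂ)) (t - τ)‖ ^ 2) ^ ((1:ℝ)/2)) ≤ C := by
  obtain ⟨δ, hδ, hδF⟩ := hF.exists_pos_forall_le_of_subset_Dsq hFD
  set g : ℤ → ℝ := fun n => √(72 * t / (π * δ ^ 6)) * rexp (-(δ ^ 2 / (8 * t)) * n ^ 2)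
  have hg : Summable g := (summable_exp_neg_mul_int_sq (by positivity)).mul_left _
  refine ⟨∑' n, g n + 1, by positivity, fun z hz => ?_⟩
  have hle := L2_norm_dxK_add_two_mul_le hδ (hδF z hz).1 (hδF z hz).2 ht
  have hsum := hg.of_nonneg_of_le (fun n => by positivity) hle
  exact ⟨hsum, (hsum.tsum_le_tsum hle hg).trans (le_add_of_nonneg_right zero_le_one)⟩
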